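/- Let 1 < q < 2 and define β₁ = q+1 and β_k = (q-1)β_{k-1} + 2 - δ_k for k ≥ 2. It is possible to choose δ_k ∈ [0, 1/2^k) for every k such that β_k ∉ ℕ for every k, the sequence (β_k) is strictly increasing, and β_k → 2/(2-q) as k → ∞. -/
import Mathlib

open Classical in
/-- Auxiliary sequence: `bseq q n` will be `β (n+1)`. -/
noncomputable def bseq (q : ℝ) : ℕ → ℝ
  | 0 => q + 1
  | n + 1 =>
      let x := (q - 1) * bseq q n + 2
      if ∃ m : ℕ, x = (m : ℝ) then
        x - (min ((1:ℝ) / 2 ^ (n + 2)) ((2 - q) * (2 / (2 - q) - bseq q n))) / 2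
      else x

lemma bseq_succ_bounds (q : ℝ) (hq1 : 1 < q) (hq2 : q < 2) (n : ℕ)
    (hlt : bseq q n < 2 / (2 - q)) :
    0 ≤ (q - 1) * bseq q n + 2 - bseq q (n + 1) ∧
    (q - 1) * bseq q n + 2 - bseq q (n + 1)
      ≤ (min ((1:ℝ) / 2 ^ (n + 2)) ((2 - q) * (2 / (2 - q) - bseq q n))) / 2 := by
  classical
  have heps : 0 < min ((1:ℝ) / 2 ^ (n + 2)) ((2 - q) * (2 / (2 - q) - bseq q n)) := by
    apply lt_min
    · positivity
    · have : (0:ℝ) < 2 - q := by linarith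
      have := sub_pos.mpr hlt
      positivity
  rw [bseq]
  split <;> exact ⟨by linarith, by linarith⟩

lemma bseq_invariant (q : ℝ) (hq1 : 1 < q) (hq2 : q < 2) :
    ∀ n, bseq q n < 2 / (2 - q) ∧ ∀ m : ℕ, bseq q n ≠ (m : ℝ) := by
  have h2q : (0:ℝ) < 2 - q := by linarith
  have hL : (2 - q) * (2 / (2 - q)) = 2 := by field_simp
  intro n
  induction n with
  | zero =>
      refine ⟨?_, ?_⟩
      · rw [bseq]
        rw [show (2:ℝ) / (2-q) = (2-q)⁻¹ * 2 by ring, lt_inv_mul_iff₀ h2q]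
        nlinarith
      · rw [bseq]
        intro m hm
        rcases le_or_gt m 2 with h | h
        · have : (m:ℝ) ≤ 2 := by exact_mod_cast h
          linarith
        · have : (3:ℝ) ≤ m := by exact_mod_cast h
          linarith
  | succ n ih =>
      obtain ⟨hlt, hnat⟩ := ih
      have hb := bseq_succ_bounds q hq1 hq2 n hlt
      set eps := min ((1:ℝ) / 2 ^ (n + 2)) ((2 - q) * (2 / (2 - q) - bseq q n)) with heps_def
      have heps_le : eps ≤ 1 / 2 ^ (n + 2) := min_le_left _ _
      have heps_le' : eps ≤ (2 - q) * (2 / (2 - q) - bseq q n) := min_le_right _ _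
      have heps_pos : 0 < eps := by
        apply lt_min
        · positivity
        · have := sub_pos.mpr hlt
          positivity
      have heps_small : eps ≤ 1 / 4 := by
        refine heps_le.trans ?_
        rw [div_le_div_iff₀ (by positivity) (by norm_num)]
        have : (4:ℝ) ≤ 2 ^ (n + 2) := by
          calc (4:ℝ) = 2 ^ 2 := by norm_num
          _ ≤ 2 ^ (n + 2) := by
            apply pow_le_pow_right₀ (by norm_num) (by omega)
        linarith
      have hxlt : (q - 1) * bseq q n + 2 < 2 / (2 - q) := by
        have h1 : (q - 1) * bseq q n < (q - 1) * (2 / (2 - q)) := by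
          apply mul_lt_mul_of_pos_left hlt (by linarith)
        have h2 : (q - 1) * (2 / (2 - q)) + 2 = 2 / (2 - q) := by
          field_simp
          ring
        linarith
      constructor
      · -- bseq q (n+1) < L
        obtain ⟨h0, _⟩ := hb
        linarith
      · -- not natural
        intro m hm
        rw [bseq] at hm
        split at hm
        · next hex =>
          obtain ⟨m', hm'⟩ := hex
          rw [hm'] at hm
          -- (m' : ℝ) - eps/2 = m
          have h1 : (m':ℝ) - (m:ℝ) = eps / 2 := by
            rw [← heps_def] at hm; linarith
          rcases le_or_gt m' m with h | h
          · have : (m':ℝ) ≤ m := by exact_mod_cast h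
            linarith
          · have : (m:ℝ) + 1 ≤ m' := by exact_mod_cast h
            linarith
        · next hex => exact hex ⟨m, hm⟩

lemma bseq_increasing (q : ℝ) (hq1 : 1 < q) (hq2 : q < 2) (n : ℕ) :
    bseq q n < bseq q (n + 1) := by
  have h2q : (0:ℝ) < 2 - q := by linarith
  obtain ⟨hlt, -⟩ := bseq_invariant q hq1 hq2 n
  obtain ⟨h0, h1⟩ := bseq_succ_bounds q hq1 hq2 n hlt
  have hgap : 0 < (2 - q) * (2 / (2 - q) - bseq q n) := by
    have := sub_pos.mpr hlt; positivity
  have hkey : (q - 1) * bseq q n + 2 - bseq q n = (2 - q) * (2 / (2 - q) - bseq q n) := by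
    field_simp; ring
  have heps_le : min ((1:ℝ) / 2 ^ (n + 2)) ((2 - q) * (2 / (2 - q) - bseq q n))
      ≤ (2 - q) * (2 / (2 - q) - bseq q n) := min_le_right _ _
  linarith

lemma bseq_contract (q : ℝ) (hq1 : 1 < q) (hq2 : q < 2) (n : ℕ) :
    2 / (2 - q) - bseq q (n + 1) ≤ (q / 2) * (2 / (2 - q) - bseq q n) := by
  have h2q : (0:ℝ) < 2 - q := by linarith
  obtain ⟨hlt, -⟩ := bseq_invariant q hq1 hq2 n
  obtain ⟨h0, h1⟩ := bseq_succ_bounds q hq1 hq2 n hlt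
  have heps_le : min ((1:ℝ) / 2 ^ (n + 2)) ((2 - q) * (2 / (2 - q) - bseq q n))
      ≤ (2 - q) * (2 / (2 - q) - bseq q n) := min_le_right _ _
  have hkey : 2 / (2 - q) - ((q - 1) * bseq q n + 2) = (q - 1) * (2 / (2 - q) - bseq q n) := by
    field_simp; ring
  nlinarith [sub_pos.mpr hlt]

lemma bseq_tendsto (q : ℝ) (hq1 : 1 < q) (hq2 : q < 2) :
    Filter.Tendsto (bseq q) Filter.atTop (nhds (2 / (2 - q))) := by
  set L := 2 / (2 - q) with hL
  have hbound : ∀ n, L - bseq q n ≤ (L - bseq q 0) * (q / 2) ^ n := by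
    intro n
    induction n with
    | zero => simp
    | succ n ih =>
        have h1 := bseq_contract q hq1 hq2 n
        have h2 : (0:ℝ) ≤ q / 2 := by linarith
        calc L - bseq q (n + 1) ≤ (q / 2) * (L - bseq q n) := h1
        _ ≤ (q / 2) * ((L - bseq q 0) * (q / 2) ^ n) := by
            apply mul_le_mul_of_nonneg_left ih h2
        _ = (L - bseq q 0) * (q / 2) ^ (n + 1) := by ring
  have hpos : ∀ n, 0 ≤ L - bseq q n := fun n =>
    le_of_lt (sub_pos.mpr (bseq_invariant q hq1 hq2 n).1)
  have htend : Filter.Tendsto (fun n => L - bseq q n) Filter.atTop (nhds 0) := by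
    apply squeeze_zero hpos hbound
    rw [show (0:ℝ) = (L - bseq q 0) * 0 by ring]
    exact (tendsto_pow_atTop_nhds_zero_of_lt_one (by linarith) (by linarith)).const_mul _
  have := htend.const_sub L
  simpa using this

theorem exists_good_beta_sequence (q : ℝ) (hq1 : 1 < q) (hq2 : q < 2) :
    ∃ δ β : ℕ → ℝ,
      β 1 = q + 1 ∧
      (∀ k, 2 ≤ k → β k = (q - 1) * β (k - 1) + 2 - δ k) ∧
      (∀ k, 2 ≤ k → δ k ∈ Set.Ico (0 : ℝ) (1 / 2 ^ k)) ∧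
      (∀ k, 1 ≤ k → ∀ n : ℕ, β k ≠ (n : ℝ)) ∧
      (∀ k, 1 ≤ k → β k < β (k + 1)) ∧
      Filter.Tendsto β Filter.atTop (nhds (2 / (2 - q))) := by
  refine ⟨fun k => (q - 1) * bseq q (k - 2) + 2 - bseq q (k - 1),
    fun k => bseq q (k - 1), ?_, ?_, ?_, ?_, ?_, ?_⟩
  · simp [bseq]
  · intro k hk
    have h1 : k - 1 - 1 = k - 2 := by omega
    beta_reduce
    rw [h1]
    ring
  · intro k hk
    obtain ⟨n, rfl⟩ : ∃ n, k = n + 2 := ⟨k - 2, by omega⟩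
    have h1 : n + 2 - 2 = n := by omega
    have h2 : n + 2 - 1 = n + 1 := by omega
    beta_reduce
    rw [h1, h2]
    obtain ⟨hlt, -⟩ := bseq_invariant q hq1 hq2 n
    obtain ⟨h0, hle⟩ := bseq_succ_bounds q hq1 hq2 n hlt
    refine ⟨h0, lt_of_le_of_lt hle ?_⟩
    have : min ((1:ℝ) / 2 ^ (n + 2)) ((2 - q) * (2 / (2 - q) - bseq q n))
        ≤ 1 / 2 ^ (n + 2) := min_le_left _ _
    have hp : (0:ℝ) < 1 / 2 ^ (n + 2) := by positivity
    linarith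
  · intro k hk n
    exact (bseq_invariant q hq1 hq2 (k - 1)).2 n
  · intro k hk
    have h1 : k + 1 - 1 = (k - 1) + 1 := by omega
    beta_reduce
    rw [h1]
    exact bseq_increasing q hq1 hq2 (k - 1)
  · exact (bseq_tendsto q hq1 hq2).comp (Filter.tendsto_sub_atTop_nat 1)
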